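/- (Lower-dimensional sharpness example) Let 5/2 ≤ σ ≤ 3, N ≥ 2, and set a_k = 1 for 1 ≤ k ≤ N^{σ/3} and a_k = 0 otherwise. Then ∫_{[0,1]²×[0,N^{-σ}]} |Σ_{k=1}^N a_k e(x·(k,k²,k³))|^p dx ≥ c^p N^{-2σ} N^{pσ/3} for some absolute constant c > 0, by restricting to the box [0, cN^{-σ/3}]×[0, cN^{-2σ/3}]×[0, N^{-σ}] on which each term in the sum has real part ≥ 1/2. -/

import Mathlib

/-! With `X = N^{σ/3}`, on the box `[0, c/X] × [0, c/X²] × [0, c/X³]` every phase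
`x₁k + x₂k² + x₃k³` with `k ≤ X` lies in `[0, 3c]`. For `c = 1/18` this forces each of the
`⌊X⌋ ≥ X/2` nonzero terms of the sum to have real part at least `cos (π/3) = 1/2`, so the integrand
is at least `(X/4)^p` on a box of volume `c³ X⁻⁶ = c³ N^{-2σ}`. -/

open MeasureTheory Set Real Complex

lemma Real.one_half_le_cos_of_abs_le {x : ℝ} (hx : |x| ≤ π / 3) : 1 / 2 ≤ Real.cos x := by
  rw [← Real.cos_abs, ← cos_pi_div_three]
  exact cos_le_cos_of_nonneg_of_le_pi (abs_nonneg x) (by linarith [pi_pos]) hx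

lemma Complex.one_half_le_re_exp_two_pi_I_mul {θ : ℝ} (hθ : |θ| ≤ 1 / 6) :
    1 / 2 ≤ (cexp (2 * π * I * θ)).re := by
  rw [show 2 * π * I * θ = ((2 * π * θ : ℝ) : ℂ) * I by push_cast; ring, exp_ofReal_mul_I_re]
  refine one_half_le_cos_of_abs_le ?_
  rw [abs_mul, abs_of_pos (by positivity : (0 : ℝ) < 2 * π)]
  nlinarith [pi_pos]

lemma Nat.div_two_le_floor {X : ℝ} (hX : 1 ≤ X) : X / 2 ≤ ⌊X⌋₊ := by
  have h1 : (1 : ℝ) ≤ ⌊X⌋₊ := by exact_mod_cast (Nat.one_le_floor_iff X).mpr hX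
  linarith [Nat.lt_floor_add_one X]

lemma Complex.card_div_two_le_norm_sum {ι : Type*} {s t : Finset ι} {f : ι → ℂ} (hts : t ⊆ s)
    (hs : ∀ i ∈ s, 0 ≤ (f i).re) (ht : ∀ i ∈ t, 1 / 2 ≤ (f i).re) :
    (t.card : ℝ) / 2 ≤ ‖∑ i ∈ s, f i‖ :=
  calc (t.card : ℝ) / 2 = ∑ _ ∈ t, (1 / 2 : ℝ) := by rw [Finset.sum_const, nsmul_eq_mul]; ring
    _ ≤ ∑ i ∈ t, (f i).re := Finset.sum_le_sum ht
    _ ≤ ∑ i ∈ s, (f i).re := Finset.sum_le_sum_of_subset_of_nonneg hts fun i hi _ => hs i hi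
    _ = (∑ i ∈ s, f i).re := (re_sum s f).symm
    _ ≤ ‖∑ i ∈ s, f i‖ := re_le_norm _

def cubicBox (c X : ℝ) : Set (ℝ × ℝ × ℝ) :=
  Icc 0 (c / X) ×ˢ Icc 0 (c / X ^ 2) ×ˢ Icc 0 (c / X ^ 3)

lemma volume_real_cubicBox {c X : ℝ} (hc : 0 ≤ c) (hX : 0 < X) :
    volume.real (cubicBox c X) = c ^ 3 / X ^ 6 := by
  simp only [cubicBox, Measure.volume_eq_prod, measureReal_prod_prod,
    Real.volume_real_Icc_of_le (by positivity : 0 ≤ c / X),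
    Real.volume_real_Icc_of_le (by positivity : 0 ≤ c / X ^ 2),
    Real.volume_real_Icc_of_le (by positivity : 0 ≤ c / X ^ 3)]
  field_simp
  ring

lemma cubicBox_subset {c X : ℝ} (hc : c ≤ 1) (hX : 1 ≤ X) :
    cubicBox c X ⊆ Icc 0 1 ×ˢ Icc 0 1 ×ˢ Icc 0 (1 / X ^ 3) := by
  have hX0 : 0 < X := by linarith
  refine prod_mono (Icc_subset_Icc_right ?_) (prod_mono (Icc_subset_Icc_right ?_)
    (Icc_subset_Icc_right ?_))
  · rw [div_le_one hX0]; linarith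
  · rw [div_le_one (by positivity)]; nlinarith
  · gcongr

lemma cubic_phase_mem_Icc {c X k : ℝ} {x : ℝ × ℝ × ℝ} (hX : 0 < X) (hx : x ∈ cubicBox c X)
    (hk : 0 ≤ k) (hkX : k ≤ X) :
    x.1 * k + x.2.1 * k ^ 2 + x.2.2 * k ^ 3 ∈ Icc 0 (3 * c) := by
  obtain ⟨⟨h₁, h₁'⟩, ⟨h₂, h₂'⟩, ⟨h₃, h₃'⟩⟩ := hx
  have bound : ∀ n : ℕ, ∀ y, 0 ≤ y → y ≤ c / X ^ n → y * k ^ n ≤ c := by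
    intro n y hy hyc
    calc y * k ^ n ≤ c / X ^ n * X ^ n := by gcongr; exact hy.trans hyc
      _ = c := div_mul_cancel₀ c (by positivity)
  constructor
  · positivity
  · linarith [bound 1 x.1 h₁ (by simpa using h₁'), bound 2 x.2.1 h₂ h₂',
      bound 3 x.2.2 h₃ h₃']

lemma div_four_le_norm_sum_of_mem_cubicBox {N : ℕ} {X : ℝ} (hX : 1 ≤ X) (hXN : X ≤ N)
    {x : ℝ × ℝ × ℝ} (hx : x ∈ cubicBox (1 / 18) X) :
    X / 4 ≤ ‖∑ k ∈ Finset.Icc 1 N, (if (k : ℝ) ≤ X then (1 : ℂ) else 0) *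
      cexp (2 * π * I * ((x.1 * k + x.2.1 * (k : ℝ) ^ 2 + x.2.2 * (k : ℝ) ^ 3 : ℝ) : ℂ))‖ := by
  have hterm : ∀ k : ℕ, (k : ℝ) ≤ X → 1 / 2 ≤
      (cexp (2 * π * I * ((x.1 * k + x.2.1 * (k : ℝ) ^ 2 + x.2.2 * (k : ℝ) ^ 3 : ℝ) : ℂ))).re := by
    intro k hkX
    obtain ⟨h0, h1⟩ := cubic_phase_mem_Icc (by linarith) hx k.cast_nonneg hkX
    exact one_half_le_re_exp_two_pi_I_mul (abs_le.mpr ⟨by linarith, by linarith⟩)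
  have hfloor : ⌊X⌋₊ ≤ N := Nat.floor_le_of_le hXN
  calc X / 4 ≤ (⌊X⌋₊ : ℝ) / 2 := by linarith [Nat.div_two_le_floor hX]
    _ = ((Finset.Icc 1 ⌊X⌋₊).card : ℝ) / 2 := by simp
    _ ≤ _ := by
      refine card_div_two_le_norm_sum (Finset.Icc_subset_Icc_right hfloor) ?_ ?_
      · intro k _
        split_ifs with hk
        · simpa using (hterm k hk).trans' (by norm_num)
        · simp
      · intro k hk
        have hkX : (k : ℝ) ≤ X := Nat.le_floor_iff (by linarith) |>.mp (Finset.mem_Icc.mp hk).2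
        simpa [hkX] using hterm k hkX

lemma div_four_rpow_mul_le_integral {N : ℕ} {X p : ℝ} (hX : 1 ≤ X) (hXN : X ≤ N) (hp : 0 ≤ p) :
    (X / 4) ^ p * ((1 / 18) ^ 3 / X ^ 6) ≤
      ∫ x in Icc (0 : ℝ) 1 ×ˢ Icc (0 : ℝ) 1 ×ˢ Icc 0 (1 / X ^ 3),
        ‖∑ k ∈ Finset.Icc 1 N, (if (k : ℝ) ≤ X then (1 : ℂ) else 0) *
          cexp (2 * π * I * ((x.1 * k + x.2.1 * (k : ℝ) ^ 2 + x.2.2 * (k : ℝ) ^ 3 : ℝ) : ℂ))‖ ^ p := by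
  have hF : Continuous fun x : ℝ × ℝ × ℝ => ‖∑ k ∈ Finset.Icc 1 N,
      (if (k : ℝ) ≤ X then (1 : ℂ) else 0) *
        cexp (2 * π * I * ((x.1 * k + x.2.1 * (k : ℝ) ^ 2 + x.2.2 * (k : ℝ) ^ 3 : ℝ) : ℂ))‖ ^ p :=
    by fun_prop (disch := positivity)
  have hD : IsCompact (Icc (0 : ℝ) 1 ×ˢ Icc (0 : ℝ) 1 ×ˢ Icc 0 (1 / X ^ 3)) :=
    isCompact_Icc.prod (isCompact_Icc.prod isCompact_Icc)
  have hsub := cubicBox_subset (by norm_num : (1 / 18 : ℝ) ≤ 1) hX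
  calc (X / 4) ^ p * ((1 / 18) ^ 3 / X ^ 6)
      = (X / 4) ^ p * volume.real (cubicBox (1 / 18) X) := by
        rw [volume_real_cubicBox (by norm_num) (by linarith)]
    _ ≤ ∫ x in cubicBox (1 / 18) X, _ :=
        setIntegral_ge_of_const_le_real
          (measurableSet_Icc.prod (measurableSet_Icc.prod measurableSet_Icc))
          (isCompact_Icc.prod (isCompact_Icc.prod isCompact_Icc)).measure_ne_top
          (fun x hx => rpow_le_rpow (by positivity)
            (div_four_le_norm_sum_of_mem_cubicBox hX hXN hx) hp)
          ((hF.continuousOn.integrableOn_compact hD).mono_set hsub)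
    _ ≤ _ := setIntegral_mono_set (hF.continuousOn.integrableOn_compact hD)
          (.of_forall fun _ => by positivity) hsub.eventuallyLE

/-- Lower-dimensional sharpness example: for `5/2 ≤ σ ≤ 3`, `N ≥ 2`,
coefficients `a_k = 1` for `1 ≤ k ≤ N^{σ/3}` and `0` otherwise, and `p ≥ 1`,
`∫_{[0,1]²×[0,N^{-σ}]} |∑_{k=1}^N a_k e(x·(k,k²,k³))|^p dx ≥ c^p N^{-2σ} N^{pσ/3}`
for some absolute constant `c > 0`. -/
theorem stmt_16 :
    ∃ c : ℝ, 0 < c ∧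
      ∀ (N : ℕ) (σ p : ℝ), 2 ≤ N → 5 / 2 ≤ σ → σ ≤ 3 → 1 ≤ p →
        c ^ p * (N : ℝ) ^ (-2 * σ) * (N : ℝ) ^ (p * σ / 3) ≤
          ∫ x in (Set.Icc (0:ℝ) 1 ×ˢ (Set.Icc (0:ℝ) 1 ×ˢ Set.Icc (0:ℝ) ((N : ℝ) ^ (-σ)))),
            ‖∑ k ∈ Finset.Icc 1 N,
              (if (k : ℝ) ≤ (N : ℝ) ^ (σ / 3) then (1 : ℂ) else 0) *
                Complex.exp (2 * Real.pi * Complex.I *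
                  ((x.1 * (k : ℝ) + x.2.1 * (k : ℝ) ^ 2 + x.2.2 * (k : ℝ) ^ 3 : ℝ) : ℂ))‖ ^ p := by
  -- `23328 = 4 · 18³`: the cube of the box constant `1/18`, and the `4` of the bound `X / 4`
  refine ⟨1 / 23328, by norm_num, fun N σ p hN hσ₁ hσ₂ hp => ?_⟩
  have hN1 : (1 : ℝ) ≤ N := by exact_mod_cast hN.trans' one_le_two
  set X := (N : ℝ) ^ (σ / 3) with hX
  have hX0 : 0 < X := by positivity
  have hXpow : ∀ a : ℝ, (N : ℝ) ^ (a * σ / 3) = X ^ a := fun a => by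
    rw [hX, ← rpow_mul (by positivity)]; ring_nf
  have hneg : ∀ n : ℕ, X ^ (-n : ℝ) = 1 / X ^ n := fun n => by
    rw [rpow_neg hX0.le, rpow_natCast, one_div]
  rw [show -2 * σ = -(6 : ℕ) * σ / 3 by push_cast; ring,
    show -σ = -(3 : ℕ) * σ / 3 by push_cast; ring, hXpow, hXpow, hXpow, hneg, hneg]
  refine le_trans ?_ (div_four_rpow_mul_le_integral (one_le_rpow hN1 (by linarith))
    (by simpa using rpow_le_rpow_of_exponent_le hN1 (show σ / 3 ≤ 1 by linarith)) (by linarith))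
  have hc : (1 / 5832 : ℝ) ^ p ≤ 1 / 5832 := by
    simpa using rpow_le_rpow_of_exponent_ge (by norm_num) (by norm_num) hp
  calc (1 / 23328 : ℝ) ^ p * (1 / X ^ 6) * X ^ p
      = (1 / 5832) ^ p * ((1 / 4) ^ p * X ^ p / X ^ 6) := by
        rw [show (1 / 23328 : ℝ) = 1 / 5832 * (1 / 4) by norm_num,
          mul_rpow (by norm_num) (by norm_num)]
        ring
    _ ≤ 1 / 5832 * ((1 / 4) ^ p * X ^ p / X ^ 6) := by gcongr
    _ = (X / 4) ^ p * ((1 / 18) ^ 3 / X ^ 6) := by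
        rw [div_eq_mul_one_div X, mul_rpow hX0.le (by norm_num)]
        ring
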